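/- arXiv:1011.3566 — 4 statements merged into one kernel-verified Lean document; each statement's English description precedes it below -/
import Mathlib

section
/- Let f : [q]^n → {0,1} be 0-monotone, μ' a probability measure on [q] with μ'(0) = 0, and μ_h = (1-h)μ' + h δ_0 applied as a product measure on [q]^n. Then the derivative at h = 0 of h ↦ E_{μ_h^{⊗n}}[f] is at least the sum over i of the influences I_{μ'}^i(f) = E_{μ'^{⊗n}}[Var(f | all coordinates except i)]. -/
/-!
Differentiating the product measure at `h = 0` splits the derivative into one term per
coordinate `i`: the expectation, over the other coordinates, of `g(0) - E_{μ'} g`, where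
`g a = f (x with x_i = a)`. Since `g` is `{0,1}`-valued and maximal at `0`, its variance
`p (1 - p)` (with `p = E_{μ'} g`) is at most `g 0 - p`.
-/

open Finset

section Fiberwise

variable {ι α : Type*} [DecidableEq ι]

lemma update_funSplitAt_symm (i : ι) (a b : α) (y : {j // j ≠ i} → α) :
    Function.update ((Equiv.funSplitAt i α).symm (b, y)) i a =
      (Equiv.funSplitAt i α).symm (a, y) := by
  ext j
  by_cases h : j = i
  · subst h; simp
  · simp [h]

lemma sum_le_sum_of_sum_update_le [Fintype ι] [Fintype α] {L R : (ι → α) → ℝ} (i : ι)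
    (h : ∀ x, ∑ a, L (Function.update x i a) ≤ ∑ a, R (Function.update x i a)) :
    ∑ x, L x ≤ ∑ x, R x := by
  set e := Equiv.funSplitAt i α
  rw [← e.symm.sum_comp L, ← e.symm.sum_comp R, Fintype.sum_prod_type, Fintype.sum_prod_type,
    sum_comm, sum_comm (f := fun a y => R (e.symm (a, y)))]
  refine sum_le_sum fun y _ => ?_
  cases isEmpty_or_nonempty α with
  | inl => simp
  | inr hα =>
    obtain ⟨b⟩ := hα
    simpa only [e, update_funSplitAt_symm] using h (e.symm (b, y))

lemma prod_erase_apply_update [Fintype ι] (μ : α → ℝ) (x : ι → α) (i : ι) (a : α) :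
    ∏ j ∈ univ.erase i, μ (Function.update x i a j) = ∏ j ∈ univ.erase i, μ (x j) :=
  prod_congr rfl fun j hj => by rw [Function.update_of_ne (ne_of_mem_erase hj)]

lemma prod_apply_update [Fintype ι] (μ : α → ℝ) (x : ι → α) (i : ι) (a : α) :
    ∏ j, μ (Function.update x i a j) = μ a * ∏ j ∈ univ.erase i, μ (x j) := by
  rw [← mul_prod_erase univ _ (mem_univ i), Function.update_self, prod_erase_apply_update]

end Fiberwise

lemma sum_mul_sq_sub_sq_le_of_zero_or_one {α : Type*} [Fintype α] (w g : α → ℝ) (a₀ : α)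
    (hg01 : ∀ a, g a = 0 ∨ g a = 1) (hg : ∀ a, g a ≤ g a₀) :
    (∑ a, w a * g a ^ 2) - (∑ a, w a * g a) ^ 2 ≤ g a₀ - ∑ a, w a * g a := by
  have hsq : ∀ a, g a ^ 2 = g a := fun a => by rcases hg01 a with h | h <;> simp [h]
  simp only [hsq]
  rcases hg01 a₀ with h₀ | h₀
  · have hzero : ∀ a, g a = 0 := fun a => (hg01 a).resolve_right fun h => by
      linarith [hg a]
    simp [hzero]
  · nlinarith [sq_nonneg (1 - ∑ a, w a * g a)]

lemma hasDerivAt_prod_lineMap {ι : Type*} [Fintype ι] [DecidableEq ι] (a b : ι → ℝ) :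
    HasDerivAt (fun h : ℝ => ∏ i, ((1 - h) * a i + h * b i))
      (∑ i, (∏ j ∈ univ.erase i, a j) * (b i - a i)) 0 := by
  have hfactor : ∀ i ∈ (univ : Finset ι),
      HasDerivAt (fun h : ℝ => (1 - h) * a i + h * b i) (b i - a i) 0 := fun i _ => by
    have := (((hasDerivAt_id (0 : ℝ)).const_sub 1).mul_const (a i)).fun_add
      ((hasDerivAt_id (0 : ℝ)).mul_const (b i))
    simpa [neg_add_eq_sub] using this
  refine (HasDerivAt.fun_finsetProd hfactor).congr_deriv ?_
  simp

section ProductMeasure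

variable {ι α : Type*} [Fintype ι] [DecidableEq ι] [Fintype α]

lemma hasDerivAt_sum_prod_lineMap_mul (a b : α → ℝ) (f : (ι → α) → ℝ) :
    HasDerivAt (fun h : ℝ => ∑ x : ι → α, (∏ i, ((1 - h) * a (x i) + h * b (x i))) * f x)
      (∑ i, ∑ x : ι → α, (∏ j ∈ univ.erase i, a (x j)) * (b (x i) - a (x i)) * f x) 0 := by
  refine (HasDerivAt.fun_sum fun x _ =>
    (hasDerivAt_prod_lineMap (a ∘ x) (b ∘ x)).mul_const (f x)).congr_deriv ?_
  rw [sum_comm]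
  exact sum_congr rfl fun x _ => sum_mul _ _ _

/-- `E_{μ^{⊗ι}}[Var(f | coordinates ≠ i)]`, with `μ` given by its weights. -/
def influence (μ : α → ℝ) (f : (ι → α) → ℝ) (i : ι) : ℝ :=
  ∑ x : ι → α, (∏ j, μ (x j)) *
    ((∑ a, μ a * f (Function.update x i a) ^ 2) - (∑ a, μ a * f (Function.update x i a)) ^ 2)

lemma influence_le_of_zero_or_one [DecidableEq α] (μ : α → ℝ) (hμ0 : ∀ a, 0 ≤ μ a)
    (hμ1 : ∑ a, μ a = 1) (f : (ι → α) → ℝ) (hf01 : ∀ x, f x = 0 ∨ f x = 1) (i : ι) (a₀ : α)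
    (hmono : ∀ x a, f (Function.update x i a) ≤ f (Function.update x i a₀)) :
    influence μ f i ≤
      ∑ x, (∏ j ∈ univ.erase i, μ (x j)) * ((if x i = a₀ then 1 else 0) - μ (x i)) * f x := by
  refine sum_le_sum_of_sum_update_le i fun x => ?_
  set w := ∏ j ∈ univ.erase i, μ (x j)
  set g : α → ℝ := fun a => f (Function.update x i a)
  have hL : ∑ a, (∏ j, μ (Function.update x i a j)) *
        ((∑ b, μ b * f (Function.update (Function.update x i a) i b) ^ 2) -
          (∑ b, μ b * f (Function.update (Function.update x i a) i b)) ^ 2)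
      = w * ((∑ b, μ b * g b ^ 2) - (∑ b, μ b * g b) ^ 2) := by
    simp only [prod_apply_update, Function.update_idem, mul_assoc, ← sum_mul, hμ1, one_mul, w, g]
  have hR : ∑ a, (∏ j ∈ univ.erase i, μ (Function.update x i a j)) *
        ((if Function.update x i a i = a₀ then 1 else 0) - μ (Function.update x i a i)) *
          f (Function.update x i a)
      = w * (g a₀ - ∑ b, μ b * g b) := by
    simp only [prod_erase_apply_update, Function.update_self, mul_assoc, ← mul_sum, sub_mul,
      sum_sub_distrib, ite_mul, one_mul, zero_mul, sum_ite_eq', mem_univ, if_true, w, g]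
  rw [hL, hR]
  exact mul_le_mul_of_nonneg_left
    (sum_mul_sq_sub_sq_le_of_zero_or_one μ g a₀ (fun a => hf01 _) (hmono x))
    (prod_nonneg fun j _ => hμ0 _)

end ProductMeasure

theorem russo_formula_general (q n : ℕ) (hq : 0 < q)
    (f : (Fin n → Fin q) → ℝ) (hf01 : ∀ x, f x = 0 ∨ f x = 1)
    (hmono : ∀ x y : Fin n → Fin q, (∀ i, y i = x i ∨ y i = ⟨0, hq⟩) → f x ≤ f y)
    (μ' : Fin q → ℝ) (hμ0 : ∀ a, 0 ≤ μ' a) (hμ1 : ∑ a, μ' a = 1)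
    (D : ℝ)
    (hD : HasDerivAt
      (fun h : ℝ => ∑ x : Fin n → Fin q,
        (∏ i, ((1 - h) * μ' (x i) + h * (if x i = ⟨0, hq⟩ then 1 else 0))) * f x) D 0) :
    ∑ i : Fin n, ∑ x : Fin n → Fin q, (∏ j, μ' (x j)) *
        ((∑ a, μ' a * (f (Function.update x i a)) ^ 2) -
          (∑ a, μ' a * f (Function.update x i a)) ^ 2)
      ≤ D := by
  rw [hD.unique (hasDerivAt_sum_prod_lineMap_mul μ' (fun a => if a = ⟨0, hq⟩ then 1 else 0) f)]
  refine sum_le_sum fun i _ => influence_le_of_zero_or_one μ' hμ0 hμ1 f hf01 i ⟨0, hq⟩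
    fun x a => hmono _ _ fun j => ?_
  by_cases h : j = i
  · subst h; simp
  · simp [h]

/-- Russo-type formula. For a `0`-monotone `f : [q]^n → {0,1}`,
`μ'` a probability measure on `[q]` with `μ'(0) = 0` and `μ_h = (1-h)μ' + h δ_0`,
the derivative at `h = 0` of `h ↦ E_{μ_h^{⊗n}}[f]` is at least
`∑ i, I_{μ'}^i(f)`, where `I_{μ'}^i(f) = E_{μ'^{⊗n}}[Var(f | coordinates ≠ i)]`. -/
theorem russo_formula (q n : ℕ) (hq : 0 < q)
    (f : (Fin n → Fin q) → ℝ) (hf01 : ∀ x, f x = 0 ∨ f x = 1)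
    (hmono : ∀ x y : Fin n → Fin q, (∀ i, y i = x i ∨ y i = ⟨0, hq⟩) → f x ≤ f y)
    (μ' : Fin q → ℝ) (hμ0 : ∀ a, 0 ≤ μ' a) (hμ1 : ∑ a, μ' a = 1)
    (hμz : μ' ⟨0, hq⟩ = 0)
    (D : ℝ)
    (hD : HasDerivAt
      (fun h : ℝ => ∑ x : Fin n → Fin q,
        (∏ i, ((1 - h) * μ' (x i) + h * (if x i = ⟨0, hq⟩ then 1 else 0))) * f x) D 0) :
    ∑ i : Fin n, ∑ x : Fin n → Fin q, (∏ j, μ' (x j)) *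
        ((∑ a, μ' a * (f (Function.update x i a)) ^ 2) -
          (∑ a, μ' a * f (Function.update x i a)) ^ 2)
      ≤ D :=
  russo_formula_general q n hq f hf01 hmono μ' hμ0 hμ1 D hD
end

section
/- For any finite product of discrete probability spaces and any f ∈ L²(∏μ_i), there exists a unique collection of functions (f_S)_{S ⊆ [n]} such that f = Σ_S f_S, each f_S depends only on the coordinates in S, and for every S ⊄ S' and every assignment x_{S'}, E[f_S | X_{S'} = x_{S'}] = 0. -/
open Finset

/-- Conditional expectation of `g` given `X_S = x_S`, for the product of the
discrete probability measures `μ i` (each assumed to sum to `1`). -/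
noncomputable def condExp {n : ℕ} {Ω : Fin n → Type*} [∀ i, Fintype (Ω i)]
    (μ : ∀ i, Ω i → ℝ) (S : Finset (Fin n)) (g : (∀ i, Ω i) → ℝ) (x : ∀ i, Ω i) : ℝ :=
  ∑ y : ∀ i, Ω i, (∏ i, μ i (y i)) * g (fun i => if i ∈ S then x i else y i)

section aux
variable {n : ℕ} {Ω : Fin n → Type*} [∀ i, Fintype (Ω i)] (μ : ∀ i, Ω i → ℝ)

lemma mass_one (hμ1 : ∀ i, ∑ a, μ i a = 1) : ∑ y : ∀ i, Ω i, ∏ i, μ i (y i) = 1 := by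
  have h := Finset.prod_univ_sum (fun i : Fin n => (univ : Finset (Ω i))) (fun i a => μ i a)
  rw [Fintype.piFinset_univ] at h
  rw [← h]
  simp [hμ1]

lemma condExp_congr (S : Finset (Fin n)) (g : (∀ i, Ω i) → ℝ) {x y : ∀ i, Ω i}
    (h : ∀ i ∈ S, x i = y i) : condExp μ S g x = condExp μ S g y := by
  unfold condExp
  apply Finset.sum_congr rfl
  intro z _
  congr 1
  apply congrArg
  funext i
  by_cases hi : i ∈ S <;> simp [hi, h i]

lemma condExp_of_depends (hμ1 : ∀ i, ∑ a, μ i a = 1) {S T : Finset (Fin n)} (hST : S ⊆ T)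
    (g : (∀ i, Ω i) → ℝ) (hg : ∀ x y, (∀ i ∈ S, x i = y i) → g x = g y) (x : ∀ i, Ω i) :
    condExp μ T g x = g x := by
  unfold condExp
  have key : ∀ y : ∀ i, Ω i, g (fun i => if i ∈ T then x i else y i) = g x := by
    intro y
    apply hg
    intro i hi
    simp [hST hi]
  simp only [key, ← Finset.sum_mul]
  rw [mass_one μ hμ1, one_mul]

lemma condExp_univ (hμ1 : ∀ i, ∑ a, μ i a = 1) (g : (∀ i, Ω i) → ℝ) (x : ∀ i, Ω i) :
    condExp μ univ g x = g x := by
  apply condExp_of_depends μ hμ1 (le_refl univ) g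
  intro x y h
  congr 1
  funext i
  exact h i (mem_univ i)

lemma condExp_sum {ι : Type*} (S : Finset (Fin n)) (A : Finset ι) (h : ι → (∀ i, Ω i) → ℝ)
    (x : ∀ i, Ω i) :
    condExp μ S (fun z => ∑ t ∈ A, h t z) x = ∑ t ∈ A, condExp μ S (h t) x := by
  simp only [condExp, Finset.mul_sum]
  exact Finset.sum_comm

lemma condExp_smul (S : Finset (Fin n)) (c : ℝ) (h : (∀ i, Ω i) → ℝ) (x : ∀ i, Ω i) :
    condExp μ S (fun z => c * h z) x = c * condExp μ S h x := by
  simp only [condExp, Finset.mul_sum]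
  apply Finset.sum_congr rfl
  intro z _
  ring

lemma condExp_tower (hμ1 : ∀ i, ∑ a, μ i a = 1) (S S' : Finset (Fin n)) (g : (∀ i, Ω i) → ℝ)
    (x : ∀ i, Ω i) :
    condExp μ S' (condExp μ S g) x = condExp μ (S ∩ S') g x := by
  classical
  let e : ((∀ i, Ω i) × (∀ i, Ω i)) ≃ ((∀ i, Ω i) × (∀ i, Ω i)) :=
    { toFun := fun p => (fun i => if i ∈ S then p.1 i else p.2 i,
                         fun i => if i ∈ S then p.2 i else p.1 i)
      invFun := fun p => (fun i => if i ∈ S then p.1 i else p.2 i,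
                          fun i => if i ∈ S then p.2 i else p.1 i)
      left_inv := fun p => by
        refine Prod.ext ?_ ?_ <;> funext i <;> by_cases hi : i ∈ S <;> simp [hi]
      right_inv := fun p => by
        refine Prod.ext ?_ ?_ <;> funext i <;> by_cases hi : i ∈ S <;> simp [hi] }
  set F : ((∀ i, Ω i) × (∀ i, Ω i)) → ℝ := fun p =>
    ((∏ i, μ i (p.1 i)) * (∏ i, μ i (p.2 i))) *
      g (fun i => if i ∈ S then (if i ∈ S' then x i else p.1 i) else p.2 i) with hF
  have h1 : condExp μ S' (condExp μ S g) x = ∑ p : ((∀ i, Ω i) × (∀ i, Ω i)), F p := by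
    rw [Fintype.sum_prod_type]
    simp only [hF, condExp, Finset.mul_sum, mul_assoc]
  have h2 : ∀ p : ((∀ i, Ω i) × (∀ i, Ω i)), F (e p) =
      ((∏ i, μ i (p.1 i)) * (∏ i, μ i (p.2 i))) *
        g (fun i => if i ∈ S ∩ S' then x i else p.1 i) := by
    intro p
    simp only [hF]
    have hw : (∏ i, μ i ((e p).1 i)) * (∏ i, μ i ((e p).2 i))
        = (∏ i, μ i (p.1 i)) * (∏ i, μ i (p.2 i)) := by
      rw [← Finset.prod_mul_distrib, ← Finset.prod_mul_distrib]
      apply Finset.prod_congr rfl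
      intro i _
      by_cases hi : i ∈ S <;> simp [e, hi, mul_comm]
    have hg : (fun i => if i ∈ S then (if i ∈ S' then x i else (e p).1 i) else (e p).2 i)
        = fun i => if i ∈ S ∩ S' then x i else p.1 i := by
      funext i
      by_cases hi : i ∈ S <;> by_cases hi' : i ∈ S' <;> simp [e, hi, hi']
    rw [hw, hg]
  calc condExp μ S' (condExp μ S g) x = ∑ p : ((∀ i, Ω i) × (∀ i, Ω i)), F p := h1
    _ = ∑ p : ((∀ i, Ω i) × (∀ i, Ω i)), F (e p) := (Equiv.sum_comp e F).symm
    _ = ∑ p : ((∀ i, Ω i) × (∀ i, Ω i)),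
          ((∏ i, μ i (p.1 i)) * (∏ i, μ i (p.2 i))) *
            g (fun i => if i ∈ S ∩ S' then x i else p.1 i) := by
        exact Finset.sum_congr rfl (fun p _ => h2 p)
    _ = condExp μ (S ∩ S') g x := by
        rw [Fintype.sum_prod_type]
        unfold condExp
        apply Finset.sum_congr rfl
        intro y _
        have hz : ∀ z : ∀ i, Ω i,
            ((∏ i, μ i (y i)) * (∏ i, μ i (z i))) *
              g (fun i => if i ∈ S ∩ S' then x i else y i)
            = (∏ i, μ i (z i)) *
              ((∏ i, μ i (y i)) * g (fun i => if i ∈ S ∩ S' then x i else y i)) := by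
          intro z; ring
        simp only [hz, ← Finset.sum_mul]
        rw [mass_one μ hμ1, one_mul]

end aux

lemma neg_one_pow_sum {n : ℕ} (s : Finset (Fin n)) :
    ∑ m ∈ s.powerset, (-1:ℝ) ^ m.card = if s = ∅ then 1 else 0 := by
  have h := Finset.sum_powerset_neg_one_pow_card (x := s)
  have h2 : ((∑ m ∈ s.powerset, (-1:ℤ) ^ m.card : ℤ) : ℝ)
      = ∑ m ∈ s.powerset, (-1:ℝ) ^ m.card := by push_cast; ring_nf
  rw [← h2, h]
  split <;> norm_num

lemma core_sum {n : ℕ} (R S : Finset (Fin n)) (hRS : R ⊆ S) :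
    ∑ T ∈ S.powerset.filter (fun T => R ⊆ T), (-1:ℝ) ^ (T.card - R.card)
      = if S = R then 1 else 0 := by
  classical
  have hb : ∑ T ∈ S.powerset.filter (fun T => R ⊆ T), (-1:ℝ) ^ (T.card - R.card)
      = ∑ U ∈ (S \ R).powerset, (-1:ℝ) ^ U.card := by
    apply Finset.sum_nbij' (i := fun T => T \ R) (j := fun U => U ∪ R)
    · intro T hT
      simp only [mem_filter, mem_powerset] at hT
      simp only [mem_powerset]
      exact sdiff_subset_sdiff hT.1 (le_refl R)
    · intro U hU
      simp only [mem_powerset] at hU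
      simp only [mem_filter, mem_powerset]
      constructor
      · exact union_subset (hU.trans (sdiff_subset)) hRS
      · exact subset_union_right
    · intro T hT
      simp only [mem_filter, mem_powerset] at hT
      rw [sdiff_union_of_subset hT.2]
    · intro U hU
      simp only [mem_powerset] at hU
      rw [union_sdiff_right]
      apply sdiff_eq_self_of_disjoint
      exact Finset.disjoint_of_subset_left hU (disjoint_sdiff_self_left)
    · intro T hT
      simp only [mem_filter, mem_powerset] at hT
      rw [Finset.card_sdiff_of_subset hT.2]
  rw [hb, neg_one_pow_sum]
  have hiff : S \ R = ∅ ↔ S = R := by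
    rw [Finset.sdiff_eq_empty_iff_subset]
    exact ⟨fun h => Finset.Subset.antisymm h hRS, fun h => h ▸ le_refl S⟩
  simp [hiff]

lemma swap_aux {n : ℕ} (S : Finset (Fin n)) (F : Finset (Fin n) → Finset (Fin n) → ℝ) :
    ∑ T ∈ S.powerset, ∑ R ∈ T.powerset, F T R
      = ∑ R ∈ S.powerset, ∑ T ∈ S.powerset.filter (fun T => R ⊆ T), F T R := by
  classical
  calc ∑ T ∈ S.powerset, ∑ R ∈ T.powerset, F T R
      = ∑ T ∈ S.powerset, ∑ R ∈ S.powerset, if R ⊆ T then F T R else 0 := by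
        apply Finset.sum_congr rfl
        intro T hT
        rw [mem_powerset] at hT
        rw [← Finset.sum_filter]
        congr 1
        ext R
        simp only [mem_filter, mem_powerset]
        exact ⟨fun h => ⟨h.trans hT, h⟩, fun h => h.2⟩
    _ = ∑ R ∈ S.powerset, ∑ T ∈ S.powerset, if R ⊆ T then F T R else 0 := Finset.sum_comm
    _ = ∑ R ∈ S.powerset, ∑ T ∈ S.powerset.filter (fun T => R ⊆ T), F T R := by
        apply Finset.sum_congr rfl
        intro R _
        rw [Finset.sum_filter]

lemma mobius1 {n : ℕ} (b : Finset (Fin n) → ℝ) (S : Finset (Fin n)) :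
    ∑ T ∈ S.powerset, (-1:ℝ) ^ (S.card - T.card) * ∑ R ∈ T.powerset, b R = b S := by
  classical
  have e1 : ∑ T ∈ S.powerset, (-1:ℝ) ^ (S.card - T.card) * ∑ R ∈ T.powerset, b R
      = ∑ T ∈ S.powerset, ∑ R ∈ T.powerset, (-1:ℝ) ^ (S.card - T.card) * b R := by
    apply Finset.sum_congr rfl
    intro T _
    rw [Finset.mul_sum]
  rw [e1, swap_aux]
  have e2 : ∀ R ∈ S.powerset,
      ∑ T ∈ S.powerset.filter (fun T => R ⊆ T), (-1:ℝ) ^ (S.card - T.card) * b R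
        = (if S = R then 1 else 0) * b R := by
    intro R hR
    rw [mem_powerset] at hR
    rw [← Finset.sum_mul]
    congr 1
    have e3 : ∀ T ∈ S.powerset.filter (fun T => R ⊆ T),
        (-1:ℝ) ^ (S.card - T.card)
          = (-1:ℝ) ^ (S.card - R.card) * (-1:ℝ) ^ (T.card - R.card) := by
      intro T hT
      simp only [mem_filter, mem_powerset] at hT
      have h1 : R.card ≤ T.card := Finset.card_le_card hT.2
      have h2 : T.card ≤ S.card := Finset.card_le_card hT.1
      have h3 : (T.card - R.card) + (S.card - T.card) = S.card - R.card := by omega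
      have h4 : (-1:ℝ) ^ (S.card - R.card)
          = (-1:ℝ) ^ (T.card - R.card) * (-1:ℝ) ^ (S.card - T.card) := by
        rw [← pow_add, h3]
      have h5 : (-1:ℝ) ^ (T.card - R.card) * (-1:ℝ) ^ (T.card - R.card) = 1 := by
        rw [← pow_add]
        exact Even.neg_one_pow ⟨T.card - R.card, rfl⟩
      rw [h4, mul_right_comm, h5, one_mul]
    rw [Finset.sum_congr rfl e3, ← Finset.mul_sum, core_sum R S hR]
    split
    · next h => subst h; simp
    · simp
  rw [Finset.sum_congr rfl e2]
  rw [Finset.sum_eq_single_of_mem S (Finset.mem_powerset_self S)]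
  · simp
  · intro R _ hne
    simp [Ne.symm hne]

lemma mobius2 {n : ℕ} (a : Finset (Fin n) → ℝ) (S : Finset (Fin n)) :
    ∑ T ∈ S.powerset, ∑ R ∈ T.powerset, (-1:ℝ) ^ (T.card - R.card) * a R = a S := by
  classical
  rw [swap_aux]
  have e2 : ∀ R ∈ S.powerset,
      ∑ T ∈ S.powerset.filter (fun T => R ⊆ T), (-1:ℝ) ^ (T.card - R.card) * a R
        = (if S = R then 1 else 0) * a R := by
    intro R hR
    rw [mem_powerset] at hR
    rw [← Finset.sum_mul, core_sum R S hR]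
  rw [Finset.sum_congr rfl e2]
  rw [Finset.sum_eq_single_of_mem S (Finset.mem_powerset_self S)]
  · simp
  · intro R _ hne
    simp [Ne.symm hne]

/-- The Efron–Stein components, defined by Möbius inversion from the
conditional expectations. -/
noncomputable def esD {n : ℕ} {Ω : Fin n → Type*} [∀ i, Fintype (Ω i)]
    (μ : ∀ i, Ω i → ℝ) (f : (∀ i, Ω i) → ℝ) (S : Finset (Fin n)) (x : ∀ i, Ω i) : ℝ :=
  ∑ T ∈ S.powerset, (-1:ℝ) ^ (S.card - T.card) * condExp μ T f x

/-- Existence and uniqueness of the Efron-Stein decomposition: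
for any finite product of discrete probability spaces and any `f`, there is a unique
family `(f_S)_{S ⊆ [n]}` with `f = Σ_S f_S`, each `f_S` depending only on the coordinates
in `S`, and `E[f_S | X_{S'} = x_{S'}] = 0` whenever `S ⊄ S'`. -/
theorem efron_stein_exists_unique (n : ℕ) (Ω : Fin n → Type) [∀ i, Fintype (Ω i)]
    [∀ i, Nonempty (Ω i)]
    (μ : ∀ i, Ω i → ℝ) (hμ0 : ∀ i a, 0 < μ i a) (hμ1 : ∀ i, ∑ a, μ i a = 1)
    (f : (∀ i, Ω i) → ℝ) :
    ∃! g : Finset (Fin n) → ((∀ i, Ω i) → ℝ),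
      (∀ x, f x = ∑ S : Finset (Fin n), g S x) ∧
      (∀ S : Finset (Fin n), ∀ x y, (∀ i ∈ S, x i = y i) → g S x = g S y) ∧
      (∀ S S' : Finset (Fin n), ¬ S ⊆ S' → ∀ x, condExp μ S' (g S) x = 0) := by
  classical
  refine ⟨esD μ f, ⟨?_, ?_, ?_⟩, ?_⟩
  · -- sums to f
    intro x
    calc f x = condExp μ univ f x := (condExp_univ μ hμ1 f x).symm
      _ = ∑ T ∈ (univ : Finset (Fin n)).powerset, ∑ R ∈ T.powerset,
            (-1:ℝ) ^ (T.card - R.card) * condExp μ R f x :=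
          (mobius2 (fun R => condExp μ R f x) univ).symm
      _ = ∑ S : Finset (Fin n), esD μ f S x := by
          rw [Finset.powerset_univ]
          rfl
  · -- depends only on coordinates in S
    intro S x y hxy
    unfold esD
    apply Finset.sum_congr rfl
    intro T hT
    rw [mem_powerset] at hT
    congr 1
    exact condExp_congr μ T f (fun i hi => hxy i (hT hi))
  · -- vanishing conditional expectations
    intro S S' hSS' x
    have lin : condExp μ S' (esD μ f S) x
        = ∑ T ∈ S.powerset, (-1:ℝ) ^ (S.card - T.card) * condExp μ (T ∩ S') f x := by
      have hd : esD μ f S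
          = fun z => ∑ T ∈ S.powerset, (-1:ℝ) ^ (S.card - T.card) * condExp μ T f z := rfl
      rw [hd, condExp_sum]
      apply Finset.sum_congr rfl
      intro T _
      rw [condExp_smul, condExp_tower μ hμ1]
    rw [lin]
    obtain ⟨i, hiS, hiS'⟩ := Finset.not_subset.mp hSS'
    have hS : S = insert i (S.erase i) := (Finset.insert_erase hiS).symm
    rw [hS, Finset.sum_powerset_insert (Finset.notMem_erase i S)]
    rw [← Finset.sum_add_distrib]
    apply Finset.sum_eq_zero
    intro T hT
    rw [mem_powerset] at hT
    have hiT : i ∉ T := fun h => Finset.notMem_erase i S (hT h)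
    have hins : insert i T ∩ S' = T ∩ S' := Finset.insert_inter_of_notMem hiS'
    rw [hins]
    have hc1 : (insert i T).card = T.card + 1 := Finset.card_insert_of_notMem hiT
    have hc2 : (insert i (S.erase i)).card = (S.erase i).card + 1 :=
      Finset.card_insert_of_notMem (Finset.notMem_erase i S)
    have hTle : T.card ≤ (S.erase i).card := Finset.card_le_card hT
    rw [hc1, hc2]
    have h1 : (S.erase i).card + 1 - T.card = ((S.erase i).card - T.card) + 1 := by omega
    have h2 : (S.erase i).card + 1 - (T.card + 1) = (S.erase i).card - T.card := by omega
    rw [h1, h2, pow_succ]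
    ring
  · -- uniqueness
    rintro g ⟨hsum, hdep, hzero⟩
    funext S x
    have stepA : ∀ T : Finset (Fin n), ∀ z,
        condExp μ T f z = ∑ R ∈ T.powerset, g R z := by
      intro T z
      have hf : f = fun w => ∑ S0 : Finset (Fin n), g S0 w := funext hsum
      rw [hf, condExp_sum]
      have hterm : ∀ S0 ∈ (univ : Finset (Finset (Fin n))),
          condExp μ T (g S0) z = if S0 ⊆ T then g S0 z else 0 := by
        intro S0 _
        by_cases hST : S0 ⊆ T
        · rw [if_pos hST]
          exact condExp_of_depends μ hμ1 hST (g S0) (hdep S0) z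
        · rw [if_neg hST]
          exact hzero S0 T hST z
      rw [Finset.sum_congr rfl hterm, ← Finset.sum_filter]
      congr 1
      ext R
      simp [Finset.mem_powerset]
    have stepB : esD μ f S x = g S x := by
      unfold esD
      have e : ∀ T ∈ S.powerset, (-1:ℝ) ^ (S.card - T.card) * condExp μ T f x
          = (-1:ℝ) ^ (S.card - T.card) * ∑ R ∈ T.powerset, g R x := by
        intro T _
        rw [stepA]
      rw [Finset.sum_congr rfl e]
      exact mobius1 (fun R => g R x) S
    exact stepB.symm
end

section
/- For the Efron-Stein components f_S(x) = Σ_{S' ⊆ S} (-1)^{|S \ S'|} E[f | X_{S'} = x_{S'}], if S' is a strict subset of S then E[f_S | X_{S'} = x_{S'}] = 0 for every x_{S'}. -/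
/-!
Conditioning on `X_{S'}` after conditioning on `X_T` is conditioning on `X_{S' ∩ T}`, since the
product measure is invariant under swapping the `T`-coordinates of two independent samples.
Hence `E[f_S | X_{S'}] = Σ_{T ⊆ S} (-1)^{|S \ T|} E[f | X_{S' ∩ T}]`, and for a fixed
`a ∈ S \ S'` the terms for `T` and `insert a T` cancel.
-/

open Finset

section CondExp

variable {n : ℕ} {Ω : Fin n → Type*} [∀ i, Fintype (Ω i)]

theorem sum_prod_eq_one (μ : ∀ i, Ω i → ℝ) (hμ1 : ∀ i, ∑ a, μ i a = 1) :
    ∑ y : ∀ i, Ω i, ∏ i, μ i (y i) = 1 := by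
  classical
  rw [← Fintype.piFinset_univ, ← prod_univ_sum]
  simp [hμ1]

theorem condExp_sum_mul {ι : Type*} (μ : ∀ i, Ω i → ℝ) (S : Finset (Fin n)) (s : Finset ι)
    (c : ι → ℝ) (g : ι → (∀ i, Ω i) → ℝ) (x : ∀ i, Ω i) :
    condExp μ S (fun z => ∑ j ∈ s, c j * g j z) x = ∑ j ∈ s, c j * condExp μ S (g j) x := by
  simp only [condExp, mul_sum]
  rw [sum_comm]
  exact sum_congr rfl fun j _ => sum_congr rfl fun y _ => by ring

/-- Drawing the `T`-coordinates from one independent sample and the others from a second one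
yields a sample of the same product law. -/
theorem sum_sum_prod_mul_piecewise (μ : ∀ i, Ω i → ℝ) (hμ1 : ∀ i, ∑ a, μ i a = 1)
    (T : Finset (Fin n)) (h : (∀ i, Ω i) → ℝ) :
    ∑ y : ∀ i, Ω i, ∑ z : ∀ i, Ω i,
        (∏ i, μ i (y i)) * (∏ i, μ i (z i)) * h (fun i => if i ∈ T then y i else z i) =
      ∑ y : ∀ i, Ω i, (∏ i, μ i (y i)) * h y := by
  have swap : Function.Involutive fun p : (∀ i, Ω i) × (∀ i, Ω i) =>
      ((fun i => if i ∈ T then p.1 i else p.2 i), (fun i => if i ∈ T then p.2 i else p.1 i)) := by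
    intro p
    refine Prod.ext ?_ ?_ <;> funext i <;> by_cases hi : i ∈ T <;> simp [hi]
  have hweight : ∀ y z : ∀ i, Ω i,
      (∏ i, μ i (if i ∈ T then y i else z i)) * ∏ i, μ i (if i ∈ T then z i else y i) =
        (∏ i, μ i (y i)) * ∏ i, μ i (z i) := by
    intro y z
    rw [← prod_mul_distrib, ← prod_mul_distrib]
    exact prod_congr rfl fun i _ => by by_cases hi : i ∈ T <;> simp [hi, mul_comm]
  rw [← Fintype.sum_prod_type', ← Equiv.sum_comp (Function.Involutive.toPerm _ swap)]
  have hmerge : ∀ y z : ∀ i, Ω i,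
      (fun i => if i ∈ T then (if i ∈ T then y i else z i) else (if i ∈ T then z i else y i)) = y :=
    fun y z => funext fun i => by by_cases hi : i ∈ T <;> simp [hi]
  simp only [Function.Involutive.coe_toPerm, hweight, hmerge, Fintype.sum_prod_type]
  refine sum_congr rfl fun y _ => ?_
  rw [← sum_mul, ← mul_sum, sum_prod_eq_one μ hμ1, mul_one]

theorem condExp_condExp (μ : ∀ i, Ω i → ℝ) (hμ1 : ∀ i, ∑ a, μ i a = 1)
    (S T : Finset (Fin n)) (f : (∀ i, Ω i) → ℝ) (x : ∀ i, Ω i) :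
    condExp μ S (condExp μ T f) x = condExp μ (S ∩ T) f x := by
  have hpiecewise : ∀ y z : ∀ i, Ω i,
      (fun i => if i ∈ T then (if i ∈ S then x i else y i) else z i) =
        fun i => if i ∈ S ∩ T then x i else (if i ∈ T then y i else z i) :=
    fun y z => funext fun i => by by_cases hT : i ∈ T <;> by_cases hS : i ∈ S <;> simp [hT, hS]
  simp only [condExp, mul_sum, ← mul_assoc, hpiecewise]
  exact sum_sum_prod_mul_piecewise μ hμ1 T fun w => f fun i => if i ∈ S ∩ T then x i else w i

end CondExp

theorem sum_powerset_neg_one_pow_card_sdiff_mul_inter_eq_zero {α R : Type*} [DecidableEq α]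
    [CommRing R] {S S' : Finset α} (hS' : S' ⊂ S) (g : Finset α → R) :
    ∑ T ∈ S.powerset, (-1 : R) ^ (S \ T).card * g (S' ∩ T) = 0 := by
  obtain ⟨a, haS, haS'⟩ := exists_of_ssubset hS'
  have has : a ∉ S.erase a := notMem_erase a S
  rw [← insert_erase haS, sum_powerset_insert has, ← sum_add_distrib]
  refine sum_eq_zero fun T hT => ?_
  have haT : a ∉ T := fun ha => has (mem_powerset.1 hT ha)
  have hcard : (insert a (S.erase a) \ T).card = (insert a (S.erase a) \ insert a T).card + 1 := by
    rw [insert_sdiff_of_notMem _ haT, card_insert_of_notMem (fun h => has (mem_sdiff.1 h).1),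
      insert_sdiff_insert, sdiff_insert_of_notMem has]
  rw [hcard, inter_insert_of_notMem haS', pow_succ]
  ring

theorem efron_stein_component_condexp_zero_general (n : ℕ) (Ω : Fin n → Type)
    [∀ i, Fintype (Ω i)]
    (μ : ∀ i, Ω i → ℝ) (hμ1 : ∀ i, ∑ a, μ i a = 1)
    (f : (∀ i, Ω i) → ℝ) (S S' : Finset (Fin n)) (hSS' : S' ⊂ S) (x : ∀ i, Ω i) :
    condExp μ S'
        (fun z => ∑ S'' ∈ S.powerset, (-1 : ℝ) ^ (S \ S'').card * condExp μ S'' f z)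
        x = 0 := by
  rw [condExp_sum_mul]
  simp only [condExp_condExp μ hμ1]
  exact sum_powerset_neg_one_pow_card_sdiff_mul_inter_eq_zero hSS' fun T => condExp μ T f x

/-- For the Efron-Stein components
`f_S(x) = Σ_{S' ⊆ S} (-1)^{|S \ S'|} E[f | X_{S'} = x_{S'}]`, if `S'` is a strict subset
of `S` then `E[f_S | X_{S'} = x_{S'}] = 0` for every `x_{S'}`. -/
theorem efron_stein_component_condexp_zero (n : ℕ) (Ω : Fin n → Type)
    [∀ i, Fintype (Ω i)] [∀ i, Nonempty (Ω i)]
    (μ : ∀ i, Ω i → ℝ) (hμ0 : ∀ i a, 0 ≤ μ i a) (hμ1 : ∀ i, ∑ a, μ i a = 1)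
    (f : (∀ i, Ω i) → ℝ) (S S' : Finset (Fin n)) (hSS' : S' ⊂ S) (x : ∀ i, Ω i) :
    condExp μ S'
        (fun z => ∑ S'' ∈ S.powerset, (-1 : ℝ) ^ (S \ S'').card * condExp μ S'' f z)
        x = 0 :=
  efron_stein_component_condexp_zero_general n Ω μ hμ1 f S S' hSS' x
end

section
/- Let f : [q]^n → [q] be fair (commutes with every permutation of the alphabet applied to all coordinates and to the output) and monotone, and let μ^s be a probability measure on [q] for which μ^s(i) = max_{j≠i} μ^s(j) and μ^s is exchangeable among the maximizing symbols in the appropriate sense (specifically μ^s(i) ≥ μ^s(j) for all j). Then P_{(μ^s)^{⊗n}}[f = i] ≥ 1/q. -/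
/-!
By fairness, `P_μ[f = j] = P_{μ ∘ (i j)}[f = i]`. Since `μ(j) ≤ μ(i)`, the law `μ` arises from
`μ ∘ (i j)` by moving mass from `j` to `i`, so the two product laws admit a coupling in which every
coordinate either agrees or is changed to `i`. Monotonicity of `f` then gives
`P_μ[f = j] ≤ P_μ[f = i]`, and summing over the `q` values of `j` yields `1 ≤ q · P_μ[f = i]`.
-/

open Finset

section Coupling

variable {ι α β : Type*} [Fintype ι] [DecidableEq ι] [Fintype β]

theorem prod_eq_sum_prod_of_sum_eq {ν : α → β → ℝ} {μ : α → ℝ} (hν : ∀ a, ∑ b, ν a b = μ a)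
    (z : ι → α) : ∏ k, μ (z k) = ∑ x : ι → β, ∏ k, ν (z k) (x k) := by
  simp only [← hν]
  exact Fintype.prod_sum _

variable [Fintype α]

/-- The easy direction of Strassen's theorem, for finite product weights. -/
theorem sum_prod_le_sum_prod_of_coupling {R : α → β → Prop} {s : Finset (ι → β)}
    {t : Finset (ι → α)} (hst : ∀ x ∈ s, ∀ z : ι → α, (∀ k, R (z k) (x k)) → z ∈ t)
    {ν : α → β → ℝ} (hν0 : ∀ a b, 0 ≤ ν a b) (hνR : ∀ a b, ν a b ≠ 0 → R a b)
    {μ : α → ℝ} {μ' : β → ℝ} (hrow : ∀ a, ∑ b, ν a b = μ a) (hcol : ∀ b, ∑ a, ν a b = μ' b) :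
    ∑ x ∈ s, ∏ k, μ' (x k) ≤ ∑ z ∈ t, ∏ k, μ (z k) := by
  have hsupp : ∀ x ∈ s, ∑ z : ι → α, ∏ k, ν (z k) (x k) = ∑ z ∈ t, ∏ k, ν (z k) (x k) := by
    refine fun x hx => (sum_subset (subset_univ t) fun z _ hz => ?_).symm
    by_contra hne
    exact hz (hst x hx z fun k => hνR _ _ (prod_ne_zero_iff.mp hne k (mem_univ k)))
  have hcol' : ∀ x : ι → β, ∏ k, μ' (x k) = ∑ z : ι → α, ∏ k, ν (z k) (x k) :=
    prod_eq_sum_prod_of_sum_eq (ν := fun b a => ν a b) hcol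
  calc ∑ x ∈ s, ∏ k, μ' (x k)
      = ∑ x ∈ s, ∑ z ∈ t, ∏ k, ν (z k) (x k) :=
        sum_congr rfl fun x hx => (hcol' x).trans (hsupp x hx)
    _ ≤ ∑ x : ι → β, ∑ z ∈ t, ∏ k, ν (z k) (x k) :=
        sum_le_sum_of_subset_of_nonneg (subset_univ s) fun x _ _ =>
          sum_nonneg fun z _ => prod_nonneg fun k _ => hν0 _ _
    _ = ∑ z ∈ t, ∏ k, μ (z k) := by
        rw [sum_comm]
        exact sum_congr rfl fun z _ => (prod_eq_sum_prod_of_sum_eq hrow z).symm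

end Coupling

/-- The coupling keeps the common mass on the diagonal and sends the surplus `μ' b - μ b` of
each `b ≠ i` to `i`. -/
theorem exists_coupling_of_le_of_ne {α : Type*} [Fintype α] [DecidableEq α] {μ μ' : α → ℝ}
    (i : α) (hμ : ∀ a, 0 ≤ μ a) (hμ'i : 0 ≤ μ' i) (hle : ∀ a ≠ i, μ a ≤ μ' a)
    (hsum : ∑ a, μ a = ∑ a, μ' a) :
    ∃ ν : α → α → ℝ, (∀ a b, 0 ≤ ν a b) ∧ (∀ a b, ν a b ≠ 0 → a = b ∨ a = i) ∧
      (∀ a, ∑ b, ν a b = μ a) ∧ (∀ b, ∑ a, ν a b = μ' b) := by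
  have hne : ∀ b ∈ ({i}ᶜ : Finset α), ¬b = i := fun b hb => by simpa using hb
  have hcompl : ∀ g : α → ℝ, ∑ b ∈ {i}ᶜ, g b = ∑ b, g b - g i := fun g => by
    rw [Fintype.sum_eq_add_sum_compl i g]; ring
  refine ⟨fun a b => if a = i then (if b = i then μ' i else μ' b - μ b)
    else if a = b then μ a else 0, fun a b => ?_, fun a b h => ?_, fun a => ?_, fun b => ?_⟩
  · dsimp only
    split_ifs with ha hb hb
    exacts [hμ'i, sub_nonneg.2 (hle b hb), hμ a, le_rfl]
  · by_contra! hab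
    simp [hab.1, hab.2] at h
  · by_cases ha : a = i
    · subst ha
      simp only [↓reduceIte]
      rw [Fintype.sum_eq_add_sum_compl a, if_pos rfl, sum_ite_of_false hne, hcompl,
        sum_sub_distrib, hsum]
      ring
    · simp [ha]
  · rw [Fintype.sum_eq_add_sum_compl i]
    by_cases hb : b = i
    · subst hb
      simp only [↓reduceIte, sum_ite_of_false hne, sum_const_zero, add_zero]
    · simp [sum_ite_of_false hne, hb]

section Product

variable {ι α : Type*} [Fintype ι] [DecidableEq ι] [Fintype α] [DecidableEq α]

theorem sum_prod_le_sum_prod_of_upward_closed (i : α) {s : Finset (ι → α)}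
    (hs : ∀ x ∈ s, ∀ z : ι → α, (∀ k, z k = x k ∨ z k = i) → z ∈ s)
    {μ μ' : α → ℝ} (hμ : ∀ a, 0 ≤ μ a) (hμ'i : 0 ≤ μ' i) (hle : ∀ a ≠ i, μ a ≤ μ' a)
    (hsum : ∑ a, μ a = ∑ a, μ' a) :
    ∑ x ∈ s, ∏ k, μ' (x k) ≤ ∑ x ∈ s, ∏ k, μ (x k) := by
  obtain ⟨ν, hν0, hνR, hrow, hcol⟩ := exists_coupling_of_le_of_ne i hμ hμ'i hle hsum
  exact sum_prod_le_sum_prod_of_coupling hs hν0 hνR hrow hcol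

theorem sum_prod_fiber_perm {f : (ι → α) → α} {σ : Equiv.Perm α}
    (hσ : ∀ x, f (fun k => σ (x k)) = σ (f x)) (μ : α → ℝ) (a : α) :
    ∑ x ∈ univ.filter (fun x => f x = σ a), ∏ k, μ (x k) =
      ∑ x ∈ univ.filter (fun x => f x = a), ∏ k, μ (σ (x k)) := by
  refine (sum_equiv (Equiv.arrowCongr (Equiv.refl ι) σ) (fun x => ?_) fun x _ => ?_).symm
  · simp only [mem_filter, mem_univ, true_and]
    change f x = a ↔ f (fun k => σ (x k)) = σ a
    rw [hσ, σ.apply_eq_iff_eq]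
  · simp

end Product

theorem fair_monotone_prob_ge_general (q n : ℕ)
    (f : (Fin n → Fin q) → Fin q)
    (hfair : ∀ σ : Equiv.Perm (Fin q), ∀ x : Fin n → Fin q,
      f (fun k => σ (x k)) = σ (f x))
    (hmono : ∀ (a : Fin q) (x y : Fin n → Fin q),
      (∀ k, y k = x k ∨ y k = a) → f x = a → f y = a)
    (i : Fin q) (μ : Fin q → ℝ)
    (hμ0 : ∀ j, 0 ≤ μ j) (hμ1 : ∑ j, μ j = 1)
    (hmax : ∀ j, μ j ≤ μ i) :
    (1 : ℝ) / q ≤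
      ∑ x ∈ Finset.univ.filter (fun x : Fin n → Fin q => f x = i), ∏ k, μ (x k) := by
  set P : Fin q → ℝ := fun j => ∑ x ∈ univ.filter (fun x => f x = j), ∏ k, μ (x k)
  have hPi : ∀ j, P j ≤ P i := by
    intro j
    set σ := Equiv.swap i j
    have hfiber : P j = ∑ x ∈ univ.filter (fun x => f x = i), ∏ k, μ (σ (x k)) := by
      simpa only [σ, Equiv.swap_apply_left] using sum_prod_fiber_perm (hfair σ) μ i
    rw [hfiber]
    refine sum_prod_le_sum_prod_of_upward_closed (μ' := fun a => μ (σ a)) i ?_ hμ0 (hμ0 _) ?_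
      (Equiv.sum_comp σ μ).symm
    · intro x hx z hz
      simp only [mem_filter, mem_univ, true_and] at hx ⊢
      exact hmono i x z hz hx
    · intro a ha
      rcases eq_or_ne a j with rfl | haj
      · simpa [σ] using hmax a
      · rw [Equiv.swap_apply_of_ne_of_ne ha haj]
  have htotal : ∑ j, P j = 1 := by
    rw [sum_fiberwise, ← Fintype.sum_pow, hμ1, one_pow]
  have hq : (0 : ℝ) < q := by exact_mod_cast i.pos
  rw [div_le_iff₀ hq]
  calc (1 : ℝ) = ∑ j, P j := htotal.symm
    _ ≤ ∑ _j : Fin q, P i := sum_le_sum fun j _ => hPi j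
    _ = P i * q := by simp [mul_comm]

/-- Let `f : [q]^n → [q]` be fair (commuting with every permutation of the
alphabet) and monotone, and let `μ` be a probability measure on `[q]` with
`μ(i) ≥ μ(j)` for all `j`. Then `P_{μ^{⊗n}}[f = i] ≥ 1/q`. -/
theorem fair_monotone_prob_ge (q n : ℕ) (hq : 0 < q)
    (f : (Fin n → Fin q) → Fin q)
    (hfair : ∀ σ : Equiv.Perm (Fin q), ∀ x : Fin n → Fin q,
      f (fun k => σ (x k)) = σ (f x))
    (hmono : ∀ (a : Fin q) (x y : Fin n → Fin q),
      (∀ k, y k = x k ∨ y k = a) → f x = a → f y = a)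
    (i : Fin q) (μ : Fin q → ℝ)
    (hμ0 : ∀ j, 0 ≤ μ j) (hμ1 : ∑ j, μ j = 1)
    (hmax : ∀ j, μ j ≤ μ i) :
    (1 : ℝ) / q ≤
      ∑ x ∈ Finset.univ.filter (fun x : Fin n → Fin q => f x = i), ∏ k, μ (x k) :=
  fair_monotone_prob_ge_general q n f hfair hmono i μ hμ0 hμ1 hmax
end
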